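/- arXiv:1403.0846 — 7 statements merged into one kernel-verified Lean document; each statement's English description precedes it below -/
import Mathlib

section
/- Let g ≥ 2, ν ≥ 1 and let c = (c₁,…,c_r) be a composition of ν (a finite sequence of positive integers with c₁+…+c_r = ν). Then there exists a tuple (x₁,…,x_g,y₁,…,y_g) of endomorphisms of ℂ^ν such that: (a) Σ_{i=1}^g (x_i y_i − y_i x_i) = 0; (b) the canonical flag (W_k) of (x_i,y_i) satisfies W_r = 0 and dim(W_{k−1}/W_k) = c_k for 1 ≤ k ≤ r; and (c) for every 1 ≤ k ≤ r−1, the only linear map ξ : W_k/W_{k+1} → W_{k−1}/W_k satisfying y_i^{(k)} ∘ ξ = ξ ∘ y_i^{(k+1)} for all 1 ≤ i ≤ g is ξ = 0, where y_i^{(k)} denotes the endomorphism induced by y_i on the quotient W_{k−1}/W_k. (This says the stratum Λ(c)₀ of the seminilpotent variety for the quiver with one vertex and g loops is nonempty.) -/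
/-!
Cut the standard basis `e₀, …, e_{ν-1}` of `ℂ^ν` into consecutive blocks of sizes `c₁, …, c_r`
and let `U_t` be the span of the `e_j` with `j ≥ t`. Let `J = blockJump` send the last vector of
each block to the first vector of the next one, let `S = blockShift` send `e_j ↦ e_{j+1}` inside
each block (and the last vector of a block to `0`), and let `D = degreeOp`, `D e_j = j e_j`.
Both `J` and `S` raise the degree by one, so `⁅D, J⁆ = J`, `⁅D, S⁆ = S`, hence
`⁅D, ⁅J, S⁆⁆ = 2⁅J, S⁆`, and the tuple `x = (J, ½⁅J, S⁆, 0, …)`, `y = (S, D, 0, …)` satisfies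
the moment map equation. With `m_k = c₁ + … + c_k`, all these operators preserve every `U_t`,
`J` and `⁅J, S⁆` map `U_{m_k}` into `U_{m_{k+1}}`, and every `S`-invariant subspace containing
`J(U_{m_k})` contains `U_{m_{k+1}}`; so `W_k = U_{m_k}`. Finally `D` has distinct eigenvalues, so
a map commuting with `D` modulo `U_t` on `U_t` sends each `e_j`, `j ≥ t`, into `U_t`: the
intertwiner vanishes.
-/

/-- The canonical flag of a tuple `(x₁,…,x_g,y₁,…,y_g)` of endomorphisms of `ℂ^ν`:
`W 0 = ℂ^ν` and `W (k+1)` is the smallest subspace containing all `xᵢ(W k)` and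
invariant under all the `xᵢ` and all the `yᵢ`. -/
noncomputable def canonicalFlag {g ν : ℕ} (x y : Fin g → Module.End ℂ (Fin ν → ℂ)) :
    ℕ → Submodule ℂ (Fin ν → ℂ)
  | 0 => ⊤
  | (k + 1) => sInf {S : Submodule ℂ (Fin ν → ℂ) |
      (∀ i, (canonicalFlag x y k).map (x i : (Fin ν → ℂ) →ₗ[ℂ] (Fin ν → ℂ)) ≤ S) ∧
      (∀ i, S.map (x i : (Fin ν → ℂ) →ₗ[ℂ] (Fin ν → ℂ)) ≤ S) ∧
      (∀ i, S.map (y i : (Fin ν → ℂ) →ₗ[ℂ] (Fin ν → ℂ)) ≤ S)}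


namespace SeminilpotentStratum

open Module

section LieIdentity

variable {L : Type*} [LieRing L]

lemma lie_lie_eq_two_nsmul_of_lie_eq_self {d a b : L} (ha : ⁅d, a⁆ = a) (hb : ⁅d, b⁆ = b) :
    ⁅d, ⁅a, b⁆⁆ = 2 • ⁅a, b⁆ := by
  rw [leibniz_lie, ha, hb, two_nsmul]

lemma lie_add_lie_inv_two_smul_lie_eq_zero {K : Type*} [Field K] [NeZero (2 : K)]
    [LieAlgebra K L] {d a b : L} (ha : ⁅d, a⁆ = a) (hb : ⁅d, b⁆ = b) :
    ⁅a, b⁆ + ⁅(2 : K)⁻¹ • ⁅a, b⁆, d⁆ = 0 := by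
  rw [smul_lie, ← lie_skew (⁅a, b⁆), lie_lie_eq_two_nsmul_of_lie_eq_self ha hb, smul_neg,
    ← ofNat_smul_eq_nsmul K 2, smul_smul, inv_mul_cancel₀ (NeZero.ne _), one_smul, add_neg_cancel]

end LieIdentity

lemma le_comap_lie {R M : Type*} [Ring R] [AddCommGroup M] [Module R M]
    {P Q : Submodule R M} {A B : Module.End R M} (hA : P ≤ Q.comap A) (hBP : P ≤ P.comap B)
    (hBQ : Q ≤ Q.comap B) : P ≤ Q.comap ⁅A, B⁆ := fun v hv => by
  rw [Submodule.mem_comap, Ring.lie_def]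
  exact Q.sub_mem (hA (hBP hv)) (hBQ (hA hv))

section LoopTuple

variable {M : Type*} [Zero M] {g : ℕ}

def loopTuple (a b : M) : Fin g → M :=
  fun i => if (i : ℕ) = 0 then a else if (i : ℕ) = 1 then b else 0

lemma forall_loopTuple {P : M → Prop} {a b : M} (ha : P a) (hb : P b) (h0 : P 0) (i : Fin g) :
    P (loopTuple a b i) := by
  unfold loopTuple; split_ifs <;> assumption

lemma sum_loopTuple {N A : Type*} [Zero N] [AddCommMonoid A] (f : M → N → A) (hf : f 0 0 = 0)
    (hg : 2 ≤ g) (a b : M) (a' b' : N) :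
    ∑ i : Fin g, f (loopTuple a b i) (loopTuple a' b' i) = f a a' + f b b' := by
  obtain ⟨n, rfl⟩ : ∃ n, g = n + 2 := ⟨g - 2, by omega⟩
  simp [Fin.sum_univ_succ, loopTuple, hf]

end LoopTuple

variable {ν : ℕ}

/-- Indexed by `ℕ` and `0` for `ν ≤ j`, so that shifts need no boundary cases. -/
def basisVec (ν j : ℕ) : Fin ν → ℂ := fun p => if (p : ℕ) = j then 1 else 0

lemma basisVec_eq_zero {j : ℕ} (h : ν ≤ j) : basisVec ν j = 0 := by
  funext p
  simp only [basisVec, Pi.zero_apply, ite_eq_right_iff, one_ne_zero, imp_false]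
  omega

lemma basisVec_val (q : Fin ν) : basisVec ν q = Pi.basisFun ℂ (Fin ν) q := by
  funext p
  simp [basisVec, Pi.single_apply, Fin.val_inj]

lemma sum_smul_basisVec (v : Fin ν → ℂ) : ∑ q, v q • basisVec ν q = v := by
  simp_rw [basisVec_val]
  exact (Pi.basisFun ℂ (Fin ν)).sum_repr v

lemma ext_basisVec {A B : Module.End ℂ (Fin ν → ℂ)}
    (h : ∀ j, A (basisVec ν j) = B (basisVec ν j)) : A = B :=
  (Pi.basisFun ℂ (Fin ν)).ext fun q => by simpa [basisVec_val] using h q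

noncomputable def weightedShift (ν : ℕ) (w : ℕ → ℂ) : Module.End ℂ (Fin ν → ℂ) :=
  (Pi.basisFun ℂ (Fin ν)).constr ℂ fun q => w q • basisVec ν (q + 1)

lemma weightedShift_basisVec (w : ℕ → ℂ) (j : ℕ) :
    weightedShift ν w (basisVec ν j) = w j • basisVec ν (j + 1) := by
  rcases lt_or_ge j ν with h | h
  · have := (Pi.basisFun ℂ (Fin ν)).constr_basis ℂ
      (fun q : Fin ν => w q • basisVec ν (q + 1)) ⟨j, h⟩
    rwa [← basisVec_val] at this
  · rw [basisVec_eq_zero h, basisVec_eq_zero (by omega), map_zero, smul_zero]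

noncomputable def degreeOp (ν : ℕ) : Module.End ℂ (Fin ν → ℂ) :=
  Matrix.toLin' (Matrix.diagonal fun p : Fin ν => (p : ℂ))

lemma degreeOp_apply (v : Fin ν → ℂ) (p : Fin ν) : degreeOp ν v p = p * v p := by
  simp [degreeOp, Matrix.mulVec_diagonal]

lemma degreeOp_basisVec (j : ℕ) : degreeOp ν (basisVec ν j) = (j : ℂ) • basisVec ν j := by
  funext p
  simp only [degreeOp_apply, basisVec, Pi.smul_apply, smul_eq_mul]
  split_ifs with h <;> simp [h]

lemma lie_degreeOp_weightedShift (w : ℕ → ℂ) :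
    ⁅degreeOp ν, weightedShift ν w⁆ = weightedShift ν w := by
  refine ext_basisVec fun j => ?_
  simp only [Ring.lie_def, LinearMap.sub_apply, Module.End.mul_apply, weightedShift_basisVec,
    degreeOp_basisVec, map_smul]
  push_cast
  module

section Blocks

variable (c : List ℕ)

def blockStart (k : ℕ) : ℕ := (c.take k).sum

lemma blockStart_mono : Monotone (blockStart c) := fun _ _ h =>
  (List.take_prefix_take_left h).sublist.sum_le_sum fun _ _ => Nat.zero_le _

lemma blockStart_succ {k : ℕ} (hk : k < c.length) :
    blockStart c (k + 1) = blockStart c k + c.get ⟨k, hk⟩ :=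
  List.sum_take_succ c k hk

lemma blockStart_length : blockStart c c.length = c.sum := by
  rw [blockStart, List.take_length]

lemma blockStart_le_sum (k : ℕ) : blockStart c k ≤ c.sum :=
  (List.take_prefix k c).sublist.sum_le_sum fun _ _ => Nat.zero_le _

def blockEnds : Set ℕ := {j | ∃ l, blockStart c l = j + 1}

variable {c}

lemma blockStart_lt_succ (hpos : ∀ a ∈ c, 0 < a) {k : ℕ} (hk : k < c.length) :
    blockStart c k < blockStart c (k + 1) := by
  rw [blockStart_succ c hk]
  have := hpos _ (List.get_mem c ⟨k, hk⟩)
  omega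

lemma sub_one_mem_blockEnds_succ (hpos : ∀ a ∈ c, 0 < a) {k : ℕ} (hk : k < c.length) :
    blockStart c (k + 1) - 1 ∈ blockEnds c :=
  ⟨k + 1, by have := blockStart_lt_succ hpos hk; omega⟩

lemma blockStart_succ_le_of_mem_blockEnds {j k : ℕ} (hj : j ∈ blockEnds c)
    (hkj : blockStart c k ≤ j) : blockStart c (k + 1) ≤ j + 1 := by
  obtain ⟨l, hl⟩ := hj
  have hkl : k < l := by
    by_contra! hlk
    have := blockStart_mono c hlk
    omega
  exact hl ▸ blockStart_mono c hkl

end Blocks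

def tailSubspace (ν t : ℕ) : Submodule ℂ (Fin ν → ℂ) where
  carrier := {v | ∀ p : Fin ν, (p : ℕ) < t → v p = 0}
  zero_mem' _ _ := rfl
  add_mem' hu hv p hp := by simp [hu p hp, hv p hp]
  smul_mem' a _ hv p hp := by simp [hv p hp]

lemma tailSubspace_antitone : Antitone (tailSubspace ν) :=
  fun _ _ h _ hv p hp => hv p (lt_of_lt_of_le hp h)

lemma tailSubspace_eq_bot {t : ℕ} (h : ν ≤ t) : tailSubspace ν t = ⊥ :=
  eq_bot_iff.2 fun v hv => funext fun p => hv p (by omega)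

lemma basisVec_mem_tailSubspace {t j : ℕ} (h : t ≤ j) : basisVec ν j ∈ tailSubspace ν t :=
  fun p hp => if_neg (by omega)

lemma tailSubspace_le_iff {t : ℕ} {S : Submodule ℂ (Fin ν → ℂ)} :
    tailSubspace ν t ≤ S ↔ ∀ j, t ≤ j → basisVec ν j ∈ S := by
  refine ⟨fun hS j hj => hS (basisVec_mem_tailSubspace hj), fun h v hv => ?_⟩
  rw [← sum_smul_basisVec v]
  refine S.sum_mem fun q _ => ?_
  by_cases hq : (q : ℕ) < t
  · simp [hv q hq]
  · exact S.smul_mem _ (h q (by omega))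

lemma finrank_tailSubspace {t : ℕ} (h : t ≤ ν) : finrank ℂ (tailSubspace ν t) = ν - t := by
  let restrict := LinearMap.funLeft ℂ ℂ (Fin.castLE h)
  have hker : tailSubspace ν t = LinearMap.ker restrict := by
    ext v
    refine ⟨fun hv => funext fun q => hv _ q.isLt, fun hv p hp => ?_⟩
    simpa [restrict, LinearMap.funLeft_apply] using congrFun hv ⟨p, hp⟩
  have hsurj : LinearMap.range restrict = ⊤ := LinearMap.range_eq_top.2 <|
    LinearMap.funLeft_surjective_of_injective ℂ ℂ _ (Fin.castLE_injective h)
  have := LinearMap.finrank_range_add_finrank_ker restrict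
  rw [hsurj, finrank_top, ← hker] at this
  simp only [Module.finrank_pi, Fintype.card_fin] at this
  omega

lemma finrank_tailSubspace_quotient {t t' : ℕ} (h : t ≤ t') (h' : t' ≤ ν) :
    finrank ℂ (tailSubspace ν t ⧸ (tailSubspace ν t').comap (tailSubspace ν t).subtype) =
      t' - t := by
  have hsub : finrank ℂ ((tailSubspace ν t').comap (tailSubspace ν t).subtype) = ν - t' := by
    rw [← finrank_tailSubspace h']
    exact (Submodule.comapSubtypeEquivOfLe (tailSubspace_antitone h)).finrank_eq
  have := Submodule.finrank_quotient_add_finrank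
    ((tailSubspace ν t').comap (tailSubspace ν t).subtype)
  rw [hsub, finrank_tailSubspace (h.trans h')] at this
  omega

lemma tailSubspace_le_comap_weightedShift (w : ℕ → ℂ) (t : ℕ) :
    tailSubspace ν t ≤ (tailSubspace ν (t + 1)).comap (weightedShift ν w) :=
  tailSubspace_le_iff.2 fun j hj => by
    rw [Submodule.mem_comap, weightedShift_basisVec]
    exact Submodule.smul_mem _ _ (basisVec_mem_tailSubspace (by omega))

lemma tailSubspace_le_comap_weightedShift_self (w : ℕ → ℂ) (t : ℕ) :
    tailSubspace ν t ≤ (tailSubspace ν t).comap (weightedShift ν w) :=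
  (tailSubspace_le_comap_weightedShift w t).trans
    (Submodule.comap_mono (tailSubspace_antitone t.le_succ))

lemma tailSubspace_le_comap_degreeOp (t : ℕ) :
    tailSubspace ν t ≤ (tailSubspace ν t).comap (degreeOp ν) :=
  fun v hv p hp => by rw [degreeOp_apply, hv p hp, mul_zero]

lemma map_tailSubspace_le_of_lie_degreeOp_mem {t : ℕ} (ξ : Module.End ℂ (Fin ν → ℂ))
    (h : ∀ v ∈ tailSubspace ν t, degreeOp ν (ξ v) - ξ (degreeOp ν v) ∈ tailSubspace ν t) :
    (tailSubspace ν t).map ξ ≤ tailSubspace ν t := by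
  rw [Submodule.map_le_iff_le_comap, tailSubspace_le_iff]
  intro j hj p hp
  have := h _ (basisVec_mem_tailSubspace hj) p hp
  rw [degreeOp_basisVec, map_smul, Pi.sub_apply, degreeOp_apply, Pi.smul_apply, smul_eq_mul,
    ← sub_mul] at this
  refine (mul_eq_zero.1 this).resolve_left (sub_ne_zero.2 ?_)
  exact_mod_cast (by omega : (p : ℕ) ≠ j)

section Stratum

variable (c : List ℕ) (ν : ℕ) {g : ℕ}

noncomputable def blockJump : Module.End ℂ (Fin ν → ℂ) :=
  weightedShift ν ((blockEnds c).indicator 1)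

noncomputable def blockShift : Module.End ℂ (Fin ν → ℂ) :=
  weightedShift ν ((blockEnds c)ᶜ.indicator 1)

noncomputable def stratumX (g : ℕ) : Fin g → Module.End ℂ (Fin ν → ℂ) :=
  loopTuple (blockJump c ν) ((2 : ℂ)⁻¹ • ⁅blockJump c ν, blockShift c ν⁆)

noncomputable def stratumY (g : ℕ) : Fin g → Module.End ℂ (Fin ν → ℂ) :=
  loopTuple (blockShift c ν) (degreeOp ν)

attribute [local instance] LieRing.ofAssociativeRing in
lemma sum_lie_stratumX_stratumY (hg : 2 ≤ g) :
    ∑ i, ⁅stratumX c ν g i, stratumY c ν g i⁆ = 0 := by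
  rw [stratumX, stratumY, sum_loopTuple (fun a b => ⁅a, b⁆) (lie_self _) hg]
  exact lie_add_lie_inv_two_smul_lie_eq_zero
    (lie_degreeOp_weightedShift _) (lie_degreeOp_weightedShift _)

variable {c ν}

lemma tailSubspace_blockStart_le_comap_blockJump (k : ℕ) :
    tailSubspace ν (blockStart c k) ≤
      (tailSubspace ν (blockStart c (k + 1))).comap (blockJump c ν) :=
  tailSubspace_le_iff.2 fun j hj => by
    rw [Submodule.mem_comap, blockJump, weightedShift_basisVec]
    by_cases hjc : j ∈ blockEnds c
    · exact Submodule.smul_mem _ _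
        (basisVec_mem_tailSubspace (blockStart_succ_le_of_mem_blockEnds hjc hj))
    · simp [hjc]

lemma tailSubspace_blockStart_succ_le (hpos : ∀ a ∈ c, 0 < a) {k : ℕ} (hk : k < c.length)
    {S : Submodule ℂ (Fin ν → ℂ)}
    (hjump : tailSubspace ν (blockStart c k) ≤ S.comap (blockJump c ν))
    (hshift : S ≤ S.comap (blockShift c ν)) : tailSubspace ν (blockStart c (k + 1)) ≤ S := by
  have hlt := blockStart_lt_succ hpos hk
  refine tailSubspace_le_iff.2 fun j hj => ?_
  induction j, hj using Nat.le_induction with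
  | base =>
    have := hjump
      (basisVec_mem_tailSubspace (by omega : blockStart c k ≤ blockStart c (k + 1) - 1))
    rwa [Submodule.mem_comap, blockJump, weightedShift_basisVec,
      Set.indicator_of_mem (sub_one_mem_blockEnds_succ hpos hk), Pi.one_apply, one_smul,
      Nat.sub_add_cancel (by omega)] at this
  | succ j hj ih =>
    by_cases hjc : j ∈ blockEnds c
    · have := hjump (basisVec_mem_tailSubspace (by omega : blockStart c k ≤ j))
      rwa [Submodule.mem_comap, blockJump, weightedShift_basisVec, Set.indicator_of_mem hjc,
        Pi.one_apply, one_smul] at this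
    · have := hshift ih
      rwa [Submodule.mem_comap, blockShift, weightedShift_basisVec,
        Set.indicator_of_mem (show j ∈ (blockEnds c)ᶜ from hjc), Pi.one_apply, one_smul] at this

lemma tailSubspace_le_comap_stratumX (t : ℕ) (i : Fin g) :
    tailSubspace ν t ≤ (tailSubspace ν t).comap (stratumX c ν g i) := by
  have hjump := tailSubspace_le_comap_weightedShift_self (ν := ν) ((blockEnds c).indicator 1) t
  have hshift := tailSubspace_le_comap_weightedShift_self (ν := ν) ((blockEnds c)ᶜ.indicator 1) t
  refine forall_loopTuple (P := fun f => tailSubspace ν t ≤ (tailSubspace ν t).comap f)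
    hjump ?_ (fun _ _ => by simp) i
  exact (le_comap_lie hjump hshift hshift).trans (Submodule.comap_le_comap_smul _ _ _)

lemma tailSubspace_le_comap_stratumY (t : ℕ) (i : Fin g) :
    tailSubspace ν t ≤ (tailSubspace ν t).comap (stratumY c ν g i) :=
  forall_loopTuple (P := fun f => tailSubspace ν t ≤ (tailSubspace ν t).comap f)
    (tailSubspace_le_comap_weightedShift_self _ t)
    (tailSubspace_le_comap_degreeOp t) (fun _ _ => by simp) i

lemma tailSubspace_blockStart_le_comap_stratumX (k : ℕ) (i : Fin g) :
    tailSubspace ν (blockStart c k) ≤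
      (tailSubspace ν (blockStart c (k + 1))).comap (stratumX c ν g i) := by
  have hjump := tailSubspace_blockStart_le_comap_blockJump (c := c) (ν := ν) k
  refine forall_loopTuple (P := fun f => tailSubspace ν (blockStart c k) ≤
    (tailSubspace ν (blockStart c (k + 1))).comap f) hjump ?_ (fun _ _ => by simp) i
  exact (le_comap_lie hjump (tailSubspace_le_comap_weightedShift_self _ _)
    (tailSubspace_le_comap_weightedShift_self _ _)).trans (Submodule.comap_le_comap_smul _ _ _)

end Stratum

lemma canonicalFlag_succ_eq {g ν k : ℕ} {x y : Fin g → Module.End ℂ (Fin ν → ℂ)}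
    {B : Submodule ℂ (Fin ν → ℂ)}
    (hxk : ∀ i, (canonicalFlag x y k).map (x i : (Fin ν → ℂ) →ₗ[ℂ] (Fin ν → ℂ)) ≤ B)
    (hx : ∀ i, B.map (x i : (Fin ν → ℂ) →ₗ[ℂ] (Fin ν → ℂ)) ≤ B)
    (hy : ∀ i, B.map (y i : (Fin ν → ℂ) →ₗ[ℂ] (Fin ν → ℂ)) ≤ B)
    (hmin : ∀ S : Submodule ℂ (Fin ν → ℂ),
      (∀ i, (canonicalFlag x y k).map (x i : (Fin ν → ℂ) →ₗ[ℂ] (Fin ν → ℂ)) ≤ S) →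
      (∀ i, S.map (y i : (Fin ν → ℂ) →ₗ[ℂ] (Fin ν → ℂ)) ≤ S) → B ≤ S) :
    canonicalFlag x y (k + 1) = B :=
  le_antisymm (sInf_le ⟨hxk, hx, hy⟩) (le_sInf fun S ⟨hxS, _, hyS⟩ => hmin S hxS hyS)

theorem canonicalFlag_stratum {c : List ℕ} {ν g : ℕ} (hg : 0 < g) (hpos : ∀ a ∈ c, 0 < a)
    {k : ℕ} (hk : k ≤ c.length) :
    canonicalFlag (stratumX c ν g) (stratumY c ν g) k = tailSubspace ν (blockStart c k) := by
  induction k with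
  | zero => exact (eq_top_iff.2 fun v _ p hp => absurd hp (Nat.not_lt_zero _)).symm
  | succ k ih =>
    have hW := ih (by omega)
    refine canonicalFlag_succ_eq (fun i => ?_) (fun i => ?_) (fun i => ?_) fun S hxS hyS => ?_
    · exact hW ▸ Submodule.map_le_iff_le_comap.2 (tailSubspace_blockStart_le_comap_stratumX k i)
    · exact Submodule.map_le_iff_le_comap.2 (tailSubspace_le_comap_stratumX _ i)
    · exact Submodule.map_le_iff_le_comap.2 (tailSubspace_le_comap_stratumY _ i)
    · rw [hW] at hxS
      refine tailSubspace_blockStart_succ_le hpos hk ?_ ?_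
      · exact Submodule.map_le_iff_le_comap.1 (hxS ⟨0, hg⟩)
      · exact Submodule.map_le_iff_le_comap.1 (hyS ⟨0, hg⟩)

end SeminilpotentStratum

open SeminilpotentStratum in
/-- Condition (c) is phrased through ambient maps `ξ` with `ξ(W_k) ⊆ W_{k−1}`,
`ξ(W_{k+1}) ⊆ W_k` that intertwine the `yᵢ` modulo `W_k`; the induced map
`W_k/W_{k+1} → W_{k−1}/W_k` vanishes iff `ξ(W_k) ⊆ W_k`. -/
theorem lambda_c_zero_nonempty_general
    (g ν : ℕ) (hg : 2 ≤ g) (c : List ℕ)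
    (hpos : ∀ a ∈ c, 0 < a) (hsum : c.sum = ν) :
    ∃ x y : Fin g → Module.End ℂ (Fin ν → ℂ),
      -- (a) the moment map condition Σ [xᵢ, yᵢ] = 0
      (∑ i, (x i * y i - y i * x i) = 0) ∧
      -- (b) the canonical flag has dimension vector c
      canonicalFlag x y c.length = ⊥ ∧
      (∀ k : Fin c.length,
        Module.finrank ℂ
          (↥(canonicalFlag x y (k : ℕ)) ⧸
            (canonicalFlag x y ((k : ℕ) + 1)).comap (canonicalFlag x y (k : ℕ)).subtype)
          = c.get k) ∧
      -- (c) for 1 ≤ k ≤ r−1, the only intertwiner W_k/W_{k+1} → W_{k−1}/W_k is 0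
      (∀ k : ℕ, 1 ≤ k → k ≤ c.length - 1 →
        ∀ ξ : (Fin ν → ℂ) →ₗ[ℂ] (Fin ν → ℂ),
          (canonicalFlag x y k).map ξ ≤ canonicalFlag x y (k - 1) →
          (canonicalFlag x y (k + 1)).map ξ ≤ canonicalFlag x y k →
          (∀ i, ∀ v ∈ canonicalFlag x y k, y i (ξ v) - ξ (y i v) ∈ canonicalFlag x y k) →
          (canonicalFlag x y k).map ξ ≤ canonicalFlag x y k) := by
  subst hsum
  have hflag {k : ℕ} (hk : k ≤ c.length) :=
    canonicalFlag_stratum (ν := c.sum) (g := g) (by omega) hpos hk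
  refine ⟨stratumX c c.sum g, stratumY c c.sum g, sum_lie_stratumX_stratumY c c.sum hg, ?_, ?_, ?_⟩
  · rw [hflag le_rfl, blockStart_length, tailSubspace_eq_bot le_rfl]
  · intro k
    rw [hflag k.isLt.le, hflag k.isLt, blockStart_succ c k.isLt,
      finrank_tailSubspace_quotient (Nat.le_add_right _ _)
        (blockStart_succ c k.isLt ▸ blockStart_le_sum c _), Nat.add_sub_cancel_left]
  · intro k _ hk ξ _ _ hcom
    rw [hflag (k := k) (by omega)] at hcom ⊢
    exact map_tailSubspace_le_of_lie_degreeOp_mem ξ (hcom ⟨1, hg⟩)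

/-- nonemptiness of the stratum `Λ(c)₀`.  Condition (c), about maps
`ξ : W_k/W_{k+1} → W_{k−1}/W_k` intertwining the induced endomorphisms `yᵢ⁽ᵏ⁺¹⁾`, `yᵢ⁽ᵏ⁾`,
is expressed equivalently through ambient linear maps `ξ : ℂ^ν → ℂ^ν` with
`ξ(W_k) ⊆ W_{k−1}`, `ξ(W_{k+1}) ⊆ W_k` and `yᵢ ∘ ξ − ξ ∘ yᵢ ≡ 0 (mod W_k)` on `W_k`:
its vanishing on the quotient means `ξ(W_k) ⊆ W_k`. -/
theorem lambda_c_zero_nonempty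
    (g ν : ℕ) (hg : 2 ≤ g) (hν : 1 ≤ ν) (c : List ℕ)
    (hpos : ∀ a ∈ c, 0 < a) (hsum : c.sum = ν) :
    ∃ x y : Fin g → Module.End ℂ (Fin ν → ℂ),
      -- (a) the moment map condition Σ [xᵢ, yᵢ] = 0
      (∑ i, (x i * y i - y i * x i) = 0) ∧
      -- (b) the canonical flag has dimension vector c
      canonicalFlag x y c.length = ⊥ ∧
      (∀ k : Fin c.length,
        Module.finrank ℂ
          (↥(canonicalFlag x y (k : ℕ)) ⧸
            (canonicalFlag x y ((k : ℕ) + 1)).comap (canonicalFlag x y (k : ℕ)).subtype)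
          = c.get k) ∧
      -- (c) for 1 ≤ k ≤ r−1, the only intertwiner W_k/W_{k+1} → W_{k−1}/W_k is 0
      (∀ k : ℕ, 1 ≤ k → k ≤ c.length - 1 →
        ∀ ξ : (Fin ν → ℂ) →ₗ[ℂ] (Fin ν → ℂ),
          (canonicalFlag x y k).map ξ ≤ canonicalFlag x y (k - 1) →
          (canonicalFlag x y (k + 1)).map ξ ≤ canonicalFlag x y k →
          (∀ i, ∀ v ∈ canonicalFlag x y k, y i (ξ v) - ξ (y i v) ∈ canonicalFlag x y k) →
          (canonicalFlag x y k).map ξ ≤ canonicalFlag x y k) :=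
  lambda_c_zero_nonempty_general g ν hg c hpos hsum
end

section
/- Let g ≥ 1 and let W, X be finite-dimensional complex vector spaces. Let x₁,…,x_g, y₁,…,y_g ∈ End(W) and z₁,…,z_g ∈ End(X). Define the linear map φ : Hom(X,W)^g × Hom(X,W)^g → Hom(X,W) by φ(u₁,…,u_g,v₁,…,v_g) = Σ_{i=1}^g (x_i ∘ v_i + u_i ∘ z_i − y_i ∘ u_i). Then dim ker φ = (2g−1)·(dim W)·(dim X) + δ, where δ = dim { ξ ∈ Hom(W,X) : ξ ∘ x_i = 0 and z_i ∘ ξ = ξ ∘ y_i for all 1 ≤ i ≤ g }. -/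
/-!
Pair `Hom(X, W)` with `Hom(W, X)` by `⟨f, ξ⟩ = tr (f ∘ ξ)`; this pairing is perfect. Cyclicity of the
trace turns `⟨φ(u, v), ξ⟩` into `∑ᵢ ⟨uᵢ, zᵢ ξ - ξ yᵢ⟩ + ⟨vᵢ, ξ xᵢ⟩`, so the annihilator of the image
of `φ` is exactly `Δ`. Hence `rank φ = dim W · dim X - δ`, and rank–nullity on the
`2g · dim W · dim X`-dimensional domain of `φ` gives the formula.
-/

open LinearMap Module

namespace LinearMap

variable {K U V : Type*} [Field K] [AddCommGroup U] [Module K U] [AddCommGroup V] [Module K V]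

theorem eq_zero_of_forall_trace_comp_eq_zero [FiniteDimensional K V] {f : U →ₗ[K] V}
    (h : ∀ ξ : V →ₗ[K] U, trace K V (f ∘ₗ ξ) = 0) : f = 0 := by
  ext u
  refine (forall_dual_apply_eq_zero_iff K (f u)).1 fun ψ => ?_
  have hcomp : f ∘ₗ ψ.smulRight u = ψ.smulRight (f u) := by ext; simp
  simpa [hcomp] using h (ψ.smulRight u)

theorem eq_zero_of_forall_trace_comp_eq_zero' [FiniteDimensional K U] [FiniteDimensional K V]
    {ξ : V →ₗ[K] U} (h : ∀ f : U →ₗ[K] V, trace K V (f ∘ₗ ξ) = 0) : ξ = 0 :=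
  eq_zero_of_forall_trace_comp_eq_zero fun f => trace_comp_comm' ξ f ▸ h f

variable (K U V) in
noncomputable def tracePairing : (U →ₗ[K] V) →ₗ[K] Dual K (V →ₗ[K] U) :=
  (llcomp K V U V).compr₂ (trace K V)

theorem tracePairing_apply (f : U →ₗ[K] V) (ξ : V →ₗ[K] U) :
    tracePairing K U V f ξ = trace K V (f ∘ₗ ξ) := rfl

theorem tracePairing_injective [FiniteDimensional K V] : Function.Injective (tracePairing K U V) :=
  (injective_iff_map_eq_zero _).2 fun f hf =>
    eq_zero_of_forall_trace_comp_eq_zero fun ξ => by rw [← tracePairing_apply, hf, zero_apply]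

noncomputable def traceOrthogonal (S : Submodule K (U →ₗ[K] V)) : Submodule K (V →ₗ[K] U) :=
  (S.map (tracePairing K U V)).dualCoannihilator

theorem mem_traceOrthogonal {S : Submodule K (U →ₗ[K] V)} {ξ : V →ₗ[K] U} :
    ξ ∈ traceOrthogonal S ↔ ∀ f ∈ S, trace K V (f ∘ₗ ξ) = 0 := by
  simp [traceOrthogonal, tracePairing_apply]

theorem finrank_add_finrank_traceOrthogonal [FiniteDimensional K U] [FiniteDimensional K V]
    (S : Submodule K (U →ₗ[K] V)) :
    finrank K S + finrank K (traceOrthogonal S) = finrank K (V →ₗ[K] U) := by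
  rw [← Subspace.finrank_add_finrank_dualCoannihilator_eq (S.map (tracePairing K U V)),
    ← (Submodule.equivMapOfInjective _ tracePairing_injective S).finrank_eq]
  rfl

end LinearMap

section

variable {K ι W X : Type*} [Field K] [Fintype ι] [AddCommGroup W] [Module K W]
  [AddCommGroup X] [Module K X]

theorem trace_sum_comp [FiniteDimensional K W] (x y : ι → Module.End K W)
    (z : ι → Module.End K X) (u v : ι → X →ₗ[K] W) (ξ : W →ₗ[K] X) :
    trace K W ((∑ i, (x i ∘ₗ v i + u i ∘ₗ z i - y i ∘ₗ u i)) ∘ₗ ξ)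
      = (∑ i, trace K W (u i ∘ₗ (z i ∘ₗ ξ - ξ ∘ₗ y i))) + ∑ i, trace K W (v i ∘ₗ (ξ ∘ₗ x i)) := by
  rw [← tracePairing_apply, map_sum, LinearMap.sum_apply, ← Finset.sum_add_distrib]
  refine Finset.sum_congr rfl fun i _ => ?_
  simp only [map_add, map_sub, LinearMap.add_apply, LinearMap.sub_apply, tracePairing_apply,
    comp_sub, comp_assoc]
  rw [← trace_comp_comm' (x i) (v i ∘ₗ ξ), ← trace_comp_comm' (y i) (u i ∘ₗ ξ)]
  simp only [comp_assoc]
  ring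

theorem sum_trace_single_comp [DecidableEq ι] (η : ι → W →ₗ[K] X) (i : ι) (a : X →ₗ[K] W) :
    ∑ j, trace K W ((Pi.single i a : ι → X →ₗ[K] W) j ∘ₗ η j) = trace K W (a ∘ₗ η i) := by
  rw [Fintype.sum_eq_single i fun j hj => by rw [Pi.single_eq_of_ne hj, zero_comp, map_zero],
    Pi.single_eq_same]

theorem mem_traceOrthogonal_range_iff [DecidableEq ι] [FiniteDimensional K W]
    [FiniteDimensional K X] {x y : ι → Module.End K W} {z : ι → Module.End K X}
    {φ : ((ι → X →ₗ[K] W) × (ι → X →ₗ[K] W)) →ₗ[K] (X →ₗ[K] W)}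
    (hφ : ∀ u v, φ (u, v) = ∑ i, (x i ∘ₗ v i + u i ∘ₗ z i - y i ∘ₗ u i)) (ξ : W →ₗ[K] X) :
    ξ ∈ traceOrthogonal (range φ) ↔ ∀ i, ξ ∘ₗ x i = 0 ∧ z i ∘ₗ ξ = ξ ∘ₗ y i := by
  simp only [mem_traceOrthogonal, mem_range, forall_exists_index, forall_apply_eq_imp_iff]
  simp only [Prod.forall, hφ, trace_sum_comp]
  refine ⟨fun h i => ⟨?_, sub_eq_zero.1 ?_⟩, fun h u v => ?_⟩
  · refine eq_zero_of_forall_trace_comp_eq_zero' fun a => ?_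
    simpa [sum_trace_single_comp] using h 0 (Pi.single i a)
  · refine eq_zero_of_forall_trace_comp_eq_zero' fun a => ?_
    simpa [sum_trace_single_comp] using h (Pi.single i a) 0
  · simp [(h _).1, (h _).2]

end

/-- the kernel of
`φ(u,v) = Σᵢ (xᵢ ∘ vᵢ + uᵢ ∘ zᵢ − yᵢ ∘ uᵢ)` has dimension
`(2g−1)·dim W·dim X + δ`, where `δ` is the dimension of the space of intertwiners
`ξ : W → X` with `ξ ∘ xᵢ = 0` and `zᵢ ∘ ξ = ξ ∘ yᵢ` for all `i`. -/
theorem finrank_ker_phi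
    (g : ℕ) (hg : 1 ≤ g)
    (W X : Type) [AddCommGroup W] [Module ℂ W] [FiniteDimensional ℂ W]
    [AddCommGroup X] [Module ℂ X] [FiniteDimensional ℂ X]
    (x y : Fin g → Module.End ℂ W) (z : Fin g → Module.End ℂ X)
    (φ : ((Fin g → (X →ₗ[ℂ] W)) × (Fin g → (X →ₗ[ℂ] W))) →ₗ[ℂ] (X →ₗ[ℂ] W))
    (hφ : ∀ u v : Fin g → (X →ₗ[ℂ] W),
      φ (u, v) = ∑ i, ((x i) ∘ₗ (v i) + (u i) ∘ₗ (z i) - (y i) ∘ₗ (u i)))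
    (Δ : Submodule ℂ (W →ₗ[ℂ] X))
    (hΔ : ∀ ξ : W →ₗ[ℂ] X, ξ ∈ Δ ↔
      ∀ i, ξ ∘ₗ (x i) = 0 ∧ (z i) ∘ₗ ξ = ξ ∘ₗ (y i)) :
    Module.finrank ℂ (LinearMap.ker φ)
      = (2 * g - 1) * Module.finrank ℂ W * Module.finrank ℂ X + Module.finrank ℂ Δ := by
  have hΔ' : Δ = traceOrthogonal (range φ) := by
    ext ξ
    rw [hΔ, mem_traceOrthogonal_range_iff hφ]
  have hrange := finrank_add_finrank_traceOrthogonal (range φ)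
  have hnullity := finrank_range_add_finrank_ker φ
  rw [← hΔ', finrank_linearMap] at hrange
  simp only [finrank_prod, finrank_pi_fintype, finrank_linearMap, Finset.sum_const,
    Finset.card_univ, Fintype.card_fin, smul_eq_mul] at hnullity
  zify [show 1 ≤ 2 * g by omega] at hrange hnullity ⊢
  linear_combination hnullity - hrange
end

section
/- Fix a vertex i ∈ I, finite-dimensional complex vector spaces (𝔍_j)_{j∈I}, a representation y = (y_h)_{h∈H} of the doubled quiver on (𝔍_j), a finite-dimensional complex vector space X, and an endomorphism z_a ∈ End(X) for every loop a ∈ H at i (arrows with s(a) = t(a) = i). Assume that the smallest I-graded subspace of ⊕_{j∈I} 𝔍_j that contains ⊕_{j≠i} 𝔍_j and is invariant under all the maps y_h (h ∈ H) is the whole space ⊕_{j∈I} 𝔍_j. Then the linear map φ : ⊕_{h∈H, s(h)=i} Hom(X, 𝔍_{t(h)}) → Hom(X, 𝔍_i) defined by φ(η) = Σ_{h∈H: s(h)=i} ε(h)·( y_{h̄} ∘ η_h + η_{h̄} ∘ z_h ), where the term η_{h̄} ∘ z_h is understood to be 0 unless h is a loop at i, is surjective. -/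
/-! Doubled quiver setup: a quiver has vertex set `I` and arrow set `Ω` with source and
target maps `s t : Ω → I`.  The doubled quiver has arrow set `H = Ω ⊕ Ω`, the second
copy consisting of the reversed arrows; `bar` is the involution exchanging the copies,
and `eps` is `1` on `Ω` and `−1` on `Ω̄`. -/

/-- The arrow set of the doubled quiver. -/
abbrev DblH (Ω : Type) : Type := Ω ⊕ Ω

/-- Source map of the doubled quiver. -/
def dblSrc {I Ω : Type} (s t : Ω → I) : DblH Ω → I := Sum.elim s t

/-- Target map of the doubled quiver. -/
def dblTgt {I Ω : Type} (s t : Ω → I) : DblH Ω → I := Sum.elim t s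

/-- The involution `h ↦ h̄` of the doubled quiver. -/
def dblBar {Ω : Type} : DblH Ω → DblH Ω := Sum.elim Sum.inr Sum.inl

/-- `ε(h) = 1` for `h ∈ Ω`, `ε(h) = −1` for `h ∈ Ω̄`. -/
def dblEps {Ω : Type} : DblH Ω → ℂ := Sum.elim (fun _ => 1) (fun _ => -1)

theorem dblSrc_bar {I Ω : Type} (s t : Ω → I) (h : DblH Ω) :
    dblSrc s t (dblBar h) = dblTgt s t h := by cases h <;> rfl

theorem dblTgt_bar {I Ω : Type} (s t : Ω → I) (h : DblH Ω) :
    dblTgt s t (dblBar h) = dblSrc s t h := by cases h <;> rfl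

/-- Transport of a linear map along an equality of vertices (cast of the codomain). -/
def cmap {I : Type} (J : I → Type) [∀ j, AddCommGroup (J j)] [∀ j, Module ℂ (J j)]
    {X : Type} [AddCommGroup X] [Module ℂ X] {a b : I} (hab : a = b)
    (f : X →ₗ[ℂ] J a) : X →ₗ[ℂ] J b := hab ▸ f

/-!
Let `W ⊆ Hom(X, 𝔍ᵢ)` be the image of `φ`, and let `S` be the graded subspace equal to `𝔍ⱼ` for
`j ≠ i` and to `{v | ξ ⊗ v ∈ W for all ξ ∈ X*}` at `i`. Applying `φ` to the family concentrated
at `h̄` with value `ξ ⊗ v` gives `ε(h̄) · ξ ⊗ y_h v`, plus `ε(h) · (ξ ∘ z_h) ⊗ v` when `h` is a loop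
at `i`; so `S` is invariant under `y`, hence everything. Thus `W` contains all rank-one maps,
which span `Hom(X, 𝔍ᵢ)` because `X` is finite-dimensional.
-/

theorem Submodule.eq_top_of_smulRight_mem {R M N : Type*} [CommSemiring R]
    [AddCommMonoid M] [Module R M] [AddCommMonoid N] [Module R N]
    [Module.Finite R M] [Module.Projective R M] {W : Submodule R (M →ₗ[R] N)}
    (hW : ∀ (f : M →ₗ[R] R) (n : N), f.smulRight n ∈ W) : W = ⊤ := by
  refine eq_top_iff'.2 fun w => ?_
  obtain ⟨τ, rfl⟩ := (dualTensorHom_bijective (R := R) (M := M) (N := N)).2 w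
  induction τ using TensorProduct.induction_on with
  | zero => simp
  | tmul f n => exact hW f n
  | add τ τ' hτ hτ' => simpa using add_mem hτ hτ'

section CastMap

variable {I : Type} (J : I → Type) [∀ j, AddCommGroup (J j)] [∀ j, Module ℂ (J j)]
  {X : Type} [AddCommGroup X] [Module ℂ X]

@[simp]
theorem cmap_self {a : I} (p : a = a) (f : X →ₗ[ℂ] J a) : cmap J p f = f := rfl

@[simp]
theorem cmap_add {a b : I} (p : a = b) (f g : X →ₗ[ℂ] J a) :
    cmap J p (f + g) = cmap J p f + cmap J p g := by
  cases p; rfl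

@[simp]
theorem cmap_smul {a b : I} (p : a = b) (c : ℂ) (f : X →ₗ[ℂ] J a) :
    cmap J p (c • f) = c • cmap J p f := by
  cases p; rfl

theorem cmap_comp {Y : Type} [AddCommGroup Y] [Module ℂ Y] {a b : I} (p : a = b)
    (f : X →ₗ[ℂ] J a) (g : Y →ₗ[ℂ] X) : cmap J p f ∘ₗ g = cmap J p (f ∘ₗ g) := by
  cases p; rfl

theorem cmap_cmap {a b c : I} (p : a = b) (q : b = c) (f : X →ₗ[ℂ] J a) :
    cmap J q (cmap J p f) = cmap J (p.trans q) f := by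
  cases p; rfl

@[simp]
theorem cmap_zero {a b : I} (p : a = b) : cmap J p (0 : X →ₗ[ℂ] J a) = 0 := by
  cases p; rfl

def cmapₗ {a b : I} (p : a = b) : (X →ₗ[ℂ] J a) →ₗ[ℂ] X →ₗ[ℂ] J b where
  toFun := cmap J p
  map_add' := cmap_add J p
  map_smul' := cmap_smul J p

@[simp]
theorem cmapₗ_apply {a b : I} (p : a = b) (f : X →ₗ[ℂ] J a) : cmapₗ J p f = cmap J p f := rfl

-- Ranging over proofs of `j = i` makes this `⊤` at every `j ≠ i`.
def rankOneSupport (i : I) (W : Submodule ℂ (X →ₗ[ℂ] J i)) (j : I) : Submodule ℂ (J j) :=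
  ⨅ (c : j = i) (ξ : X →ₗ[ℂ] ℂ), W.comap (cmapₗ J c ∘ₗ LinearMap.smulRightₗ ξ)

variable {J}

theorem mem_rankOneSupport {i j : I} {W : Submodule ℂ (X →ₗ[ℂ] J i)} {v : J j} :
    v ∈ rankOneSupport J i W j ↔ ∀ (c : j = i) (ξ : X →ₗ[ℂ] ℂ), cmap J c (ξ.smulRight v) ∈ W := by
  simp [rankOneSupport, Submodule.mem_iInf]

theorem rankOneSupport_of_ne {i j : I} (W : Submodule ℂ (X →ₗ[ℂ] J i)) (hj : j ≠ i) :
    rankOneSupport J i W j = ⊤ := by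
  simp [rankOneSupport, hj]

end CastMap

section DoubledQuiver

variable {Ω : Type}

theorem dblBar_involutive : Function.Involutive (dblBar (Ω := Ω)) := by
  intro h; cases h <;> rfl

theorem dblBar_ne (h : DblH Ω) : dblBar h ≠ h := by
  cases h <;> simp [dblBar]

theorem dblEps_mul_self (h : DblH Ω) : dblEps h * dblEps h = 1 := by
  cases h <;> simp [dblEps]

end DoubledQuiver

section PhiTerm

variable {I Ω : Type} [DecidableEq I] (s t : Ω → I)
  (J : I → Type) [∀ j, AddCommGroup (J j)] [∀ j, Module ℂ (J j)]
  (y : ∀ h : DblH Ω, J (dblSrc s t h) →ₗ[ℂ] J (dblTgt s t h))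
  {X : Type} [AddCommGroup X] [Module ℂ X] (z : DblH Ω → Module.End ℂ X) (i : I)

def phiTerm (h : DblH Ω) : (∀ h : DblH Ω, X →ₗ[ℂ] J (dblTgt s t h)) →ₗ[ℂ] X →ₗ[ℂ] J i where
  toFun η :=
    if c : dblSrc s t h = i then
      dblEps h •
        cmap J ((dblTgt_bar s t h).trans c)
          ((y (dblBar h)) ∘ₗ (cmap J (dblSrc_bar s t h).symm (η h)) +
            (if dblTgt s t h = i then (η (dblBar h)) ∘ₗ (z h) else 0))
    else 0
  map_add' η η' := by
    split_ifs <;> simp [LinearMap.comp_add, LinearMap.add_comp, smul_add, add_add_add_comm]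
  map_smul' r η := by
    split_ifs <;> simp [LinearMap.comp_smul, LinearMap.smul_comp, smul_comm r]

variable {s t J y z i}

theorem phiTerm_apply (h : DblH Ω) (η : ∀ h : DblH Ω, X →ₗ[ℂ] J (dblTgt s t h)) :
    phiTerm s t J y z i h η =
      if c : dblSrc s t h = i then
        dblEps h •
          cmap J ((dblTgt_bar s t h).trans c)
            ((y (dblBar h)) ∘ₗ (cmap J (dblSrc_bar s t h).symm (η h)) +
              (if dblTgt s t h = i then (η (dblBar h)) ∘ₗ (z h) else 0))
      else 0 :=
  rfl

theorem phiTerm_eq_zero {η : ∀ h : DblH Ω, X →ₗ[ℂ] J (dblTgt s t h)} {h : DblH Ω}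
    (hη : η h = 0) (hη' : η (dblBar h) = 0) : phiTerm s t J y z i h η = 0 := by
  simp [phiTerm_apply, hη, hη']

end PhiTerm

section Phi

variable {I Ω : Type} [Fintype Ω] [DecidableEq I] (s t : Ω → I)
  (J : I → Type) [∀ j, AddCommGroup (J j)] [∀ j, Module ℂ (J j)]
  (y : ∀ h : DblH Ω, J (dblSrc s t h) →ₗ[ℂ] J (dblTgt s t h))
  {X : Type} [AddCommGroup X] [Module ℂ X] (z : DblH Ω → Module.End ℂ X) (i : I)

def phi : (∀ h : DblH Ω, X →ₗ[ℂ] J (dblTgt s t h)) →ₗ[ℂ] X →ₗ[ℂ] J i :=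
  ∑ h, phiTerm s t J y z i h

variable {s t J y z i}

theorem phi_apply (η : ∀ h : DblH Ω, X →ₗ[ℂ] J (dblTgt s t h)) :
    phi s t J y z i η = ∑ h, phiTerm s t J y z i h η :=
  LinearMap.sum_apply _ _ _

theorem phi_eq_add {η : ∀ h : DblH Ω, X →ₗ[ℂ] J (dblTgt s t h)} (h : DblH Ω)
    (hη : ∀ g, g ≠ h → g ≠ dblBar h → η g = 0) :
    phi s t J y z i η = phiTerm s t J y z i h η + phiTerm s t J y z i (dblBar h) η := by
  rw [phi_apply]
  refine Fintype.sum_eq_add _ _ (dblBar_ne h).symm fun g ⟨hg, hg'⟩ =>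
    phiTerm_eq_zero (hη g hg hg') (hη _ ?_ (dblBar_involutive.injective.ne hg))
  rintro rfl
  exact hg' (dblBar_involutive g).symm

theorem phi_single_bar [DecidableEq Ω] (h : DblH Ω) (u : X →ₗ[ℂ] J (dblSrc s t h)) :
    phi s t J y z (dblTgt s t h) (Pi.single (dblBar h) (cmap J (dblTgt_bar s t h).symm u)) =
      dblEps (dblBar h) • y h ∘ₗ u +
        if c : dblSrc s t h = dblTgt s t h then dblEps h • cmap J c (u ∘ₗ z h) else 0 := by
  rw [phi_eq_add h fun g _ hg => Pi.single_eq_of_ne hg _, add_comm]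
  simp only [phiTerm_apply, Pi.single_eq_same, Pi.single_eq_of_ne (dblBar_ne h).symm,
    Pi.single_eq_of_ne (dblBar_ne (dblBar h)), cmap_zero, LinearMap.comp_zero,
    LinearMap.zero_comp, ite_self, add_zero, zero_add, dif_pos (dblSrc_bar s t h), ↓reduceIte,
    cmap_comp, cmap_cmap]
  congr 1
  cases h <;> rfl

theorem smulRight_apply_mem_range_phi (h : DblH Ω) {v : J (dblSrc s t h)}
    (hv : ∀ (c : dblSrc s t h = dblTgt s t h) (ξ : X →ₗ[ℂ] ℂ),
      cmap J c (ξ.smulRight v) ∈ LinearMap.range (phi s t J y z (dblTgt s t h)))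
    (ξ : X →ₗ[ℂ] ℂ) :
    ξ.smulRight (y h v) ∈ LinearMap.range (phi s t J y z (dblTgt s t h)) := by
  classical
  set W := LinearMap.range (phi s t J y z (dblTgt s t h))
  set η : ∀ g : DblH Ω, X →ₗ[ℂ] J (dblTgt s t g) :=
    Pi.single (dblBar h) (cmap J (dblTgt_bar s t h).symm (ξ.smulRight v))
  set r := if c : dblSrc s t h = dblTgt s t h then
    dblEps h • cmap J c ((ξ ∘ₗ z h).smulRight v) else 0
  have hr : r ∈ W := by
    unfold r; split_ifs with c
    exacts [W.smul_mem _ (hv c _), W.zero_mem]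
  have hη : phi s t J y z _ η = dblEps (dblBar h) • ξ.smulRight (y h v) + r := by
    rw [phi_single_bar]
    congr 3; ext; simp
  have key : ξ.smulRight (y h v) = dblEps (dblBar h) • (phi s t J y z _ η - r) := by
    rw [hη, add_sub_cancel_right, smul_smul, dblEps_mul_self, one_smul]
  rw [key]
  exact W.smul_mem _ (W.sub_mem (LinearMap.mem_range_self _ η) hr)

theorem rankOneSupport_range_phi_invariant (h : DblH Ω) {v : J (dblSrc s t h)}
    (hv : v ∈ rankOneSupport J i (LinearMap.range (phi s t J y z i)) (dblSrc s t h)) :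
    y h v ∈ rankOneSupport J i (LinearMap.range (phi s t J y z i)) (dblTgt s t h) := by
  rw [mem_rankOneSupport] at hv ⊢
  rintro rfl ξ
  exact smulRight_apply_mem_range_phi h hv ξ

end Phi

theorem phi_surjective_general
    (I Ω : Type) [Fintype Ω] [DecidableEq I]
    (s t : Ω → I)
    (J : I → Type) [∀ j, AddCommGroup (J j)] [∀ j, Module ℂ (J j)]
    (i : I)
    (y : ∀ h : DblH Ω, J (dblSrc s t h) →ₗ[ℂ] J (dblTgt s t h))
    (X : Type) [AddCommGroup X] [Module ℂ X] [FiniteDimensional ℂ X]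
    (z : DblH Ω → Module.End ℂ X)
    (hgen : ∀ S : ∀ j, Submodule ℂ (J j),
      (∀ j, j ≠ i → S j = ⊤) →
      (∀ h : DblH Ω, ∀ v ∈ S (dblSrc s t h), y h v ∈ S (dblTgt s t h)) →
      S i = ⊤) :
    ∀ w : X →ₗ[ℂ] J i,
      ∃ η : ∀ h : DblH Ω, X →ₗ[ℂ] J (dblTgt s t h),
        (∑ h : DblH Ω,
          if c : dblSrc s t h = i then
            dblEps h •
              cmap J ((dblTgt_bar s t h).trans c)
                ((y (dblBar h)) ∘ₗ (cmap J (dblSrc_bar s t h).symm (η h)) +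
                  (if dblTgt s t h = i then (η (dblBar h)) ∘ₗ (z h) else 0))
          else 0) = w := by
  set W := LinearMap.range (phi s t J y z i)
  have hS : rankOneSupport J i W i = ⊤ :=
    hgen _ (fun _ => rankOneSupport_of_ne W) fun h _ => rankOneSupport_range_phi_invariant h
  have hW : W = ⊤ := Submodule.eq_top_of_smulRight_mem fun ξ v =>
    mem_rankOneSupport.1 (hS ▸ Submodule.mem_top) rfl ξ
  intro w
  obtain ⟨η, hη⟩ := LinearMap.range_eq_top.1 hW w
  exact ⟨η, by rwa [phi_apply] at hη⟩

/-- if the smallest `I`-graded subspace of `⊕ⱼ 𝔍ⱼ` containing `⊕_{j≠i} 𝔍ⱼ`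
and invariant under the representation `y` is everything, then the map
`φ(η) = Σ_{h : s(h)=i} ε(h)·(y_{h̄} ∘ η_h + η_{h̄} ∘ z_h)` (the second term present only
for loops at `i`) is surjective onto `Hom(X, 𝔍ᵢ)`. -/
theorem phi_surjective
    (I Ω : Type) [Fintype I] [Fintype Ω] [DecidableEq I]
    (s t : Ω → I)
    (J : I → Type) [∀ j, AddCommGroup (J j)] [∀ j, Module ℂ (J j)]
    [∀ j, FiniteDimensional ℂ (J j)]
    (i : I)
    (y : ∀ h : DblH Ω, J (dblSrc s t h) →ₗ[ℂ] J (dblTgt s t h))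
    (X : Type) [AddCommGroup X] [Module ℂ X] [FiniteDimensional ℂ X]
    (z : DblH Ω → Module.End ℂ X)
    (hgen : ∀ S : ∀ j, Submodule ℂ (J j),
      (∀ j, j ≠ i → S j = ⊤) →
      (∀ h : DblH Ω, ∀ v ∈ S (dblSrc s t h), y h v ∈ S (dblTgt s t h)) →
      S i = ⊤) :
    ∀ w : X →ₗ[ℂ] J i,
      ∃ η : ∀ h : DblH Ω, X →ₗ[ℂ] J (dblTgt s t h),
        (∑ h : DblH Ω,
          if c : dblSrc s t h = i then
            dblEps h •
              cmap J ((dblTgt_bar s t h).trans c)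
                ((y (dblBar h)) ∘ₗ (cmap J (dblSrc_bar s t h).symm (η h)) +
                  (if dblTgt s t h = i then (η (dblBar h)) ∘ₗ (z h) else 0))
          else 0) = w :=
  phi_surjective_general I Ω s t J i y X z hgen
end

section
/- Let V and W be finite-dimensional complex vector spaces, and let y ∈ End(V) and z ∈ End(W) have disjoint spectra: spectrum(y) ∩ spectrum(z) = ∅. If v ∈ V is a cyclic vector for y, i.e. the span of { y^k v : k ∈ ℕ } equals V, and w ∈ W is a cyclic vector for z, then (v, w) is a cyclic vector for the endomorphism y ⊕ z of V × W, i.e. the span of { (y ⊕ z)^k (v, w) : k ∈ ℕ } equals V × W. -/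
/-!
Disjoint spectra make the minimal polynomials `p` of `y` and `q` of `z` coprime, say
`a p + b q = 1`. Evaluated at `y ⊕ z`, the polynomials `b q` and `a p` are the projections onto
`V` and onto `W`; as polynomials in `y ⊕ z` they preserve the cyclic subspace of `(v, w)`, which
therefore contains every `(y^k v, 0)` and every `(0, z^k w)`.
-/

open Polynomial Submodule LinearMap

namespace Module.End

variable {R M N : Type*} [CommSemiring R] [AddCommMonoid M] [Module R M]
  [AddCommMonoid N] [Module R N]

theorem aeval_apply_mem_span_range_pow (f : End R M) (x : M) (p : R[X]) :
    aeval f p x ∈ span R (Set.range fun k : ℕ => (f ^ k) x) := by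
  rw [aeval_eq_sum_range, LinearMap.sum_apply]
  exact sum_mem fun i _ => smul_mem _ _ (subset_span ⟨i, rfl⟩)

theorem aeval_prodMap (y : End R M) (z : End R N) (p : R[X]) :
    aeval (prodMap y z) p = prodMap (aeval y p) (aeval z p) := by
  have hpair : aeval (y, z) p = (aeval y p, aeval z p) :=
    Prod.ext (aeval_algHom_apply (AlgHom.fst R _ _) (y, z) p).symm
      (aeval_algHom_apply (AlgHom.snd R _ _) (y, z) p).symm
  exact (aeval_algHom_apply (prodMapAlgHom R M N) (y, z) p).trans
    (congrArg (prodMapAlgHom R M N) hpair)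

theorem span_range_pow_prodMap_apply_eq_top {y : End R M} {z : End R N} {p q : R[X]}
    (hpq : IsCoprime p q) (hy : aeval y p = 0) (hz : aeval z q = 0) {v : M} {w : N}
    (hv : span R (Set.range fun k : ℕ => (y ^ k) v) = ⊤)
    (hw : span R (Set.range fun k : ℕ => (z ^ k) w) = ⊤) :
    span R (Set.range fun k : ℕ => (prodMap y z ^ k) (v, w)) = ⊤ := by
  obtain ⟨a, b, hab⟩ := hpq
  have hbq : aeval y (b * q) = 1 := by simpa [hy] using congr(aeval y $hab)
  have hap : aeval z (a * p) = 1 := by simpa [hz] using congr(aeval z $hab)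
  have aeval_pair_mem (r : R[X]) :
      (aeval y r v, aeval z r w) ∈ span R (Set.range fun k : ℕ => (prodMap y z ^ k) (v, w)) := by
    simpa [aeval_prodMap] using aeval_apply_mem_span_range_pow (prodMap y z) (v, w) r
  rw [eq_top_iff, ← sup_range_inl_inr, sup_le_iff, range_eq_map, range_eq_map, ← hv, ← hw,
    Submodule.map_span, Submodule.map_span, span_le, span_le]
  constructor
  · rintro _ ⟨_, ⟨k, rfl⟩, rfl⟩
    have h := aeval_pair_mem (X ^ k * (b * q))
    simpa only [_root_.map_mul, map_pow, aeval_X, hbq, hz, mul_zero, mul_one,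
      LinearMap.zero_apply, inl_apply, inr_apply, SetLike.mem_coe] using h
  · rintro _ ⟨_, ⟨k, rfl⟩, rfl⟩
    have h := aeval_pair_mem (X ^ k * (a * p))
    simpa only [_root_.map_mul, map_pow, aeval_X, hy, hap, mul_zero, mul_one,
      LinearMap.zero_apply, inl_apply, inr_apply, SetLike.mem_coe] using h

theorem isCoprime_minpoly_of_disjoint_spectrum {K V W : Type*} [Field K] [IsAlgClosed K]
    [AddCommGroup V] [Module K V] [FiniteDimensional K V]
    [AddCommGroup W] [Module K W] [FiniteDimensional K W] {y : End K V} {z : End K W}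
    (h : Disjoint (spectrum K y) (spectrum K z)) : IsCoprime (minpoly K y) (minpoly K z) := by
  rw [isCoprime_iff_aeval_ne_zero_of_isAlgClosed K K]
  intro μ
  by_contra! hμ
  refine h.ne_of_mem ?_ ?_ rfl (b := μ) <;>
    rw [← hasEigenvalue_iff_mem_spectrum, hasEigenvalue_iff_isRoot]
  · simpa using hμ.1
  · simpa using hμ.2

end Module.End

/-- If `y ∈ End(V)` and `z ∈ End(W)` have disjoint spectra, `v` is a cyclic
vector for `y` and `w` is a cyclic vector for `z`, then `(v, w)` is a cyclic vector for
`y ⊕ z ∈ End(V × W)`. -/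
theorem cyclic_vector_prod_of_disjoint_spectra
    (V W : Type) [AddCommGroup V] [Module ℂ V] [FiniteDimensional ℂ V]
    [AddCommGroup W] [Module ℂ W] [FiniteDimensional ℂ W]
    (y : Module.End ℂ V) (z : Module.End ℂ W)
    (hdisj : spectrum ℂ y ∩ spectrum ℂ z = ∅)
    (v : V) (hv : Submodule.span ℂ (Set.range fun k : ℕ => (y ^ k) v) = ⊤)
    (w : W) (hw : Submodule.span ℂ (Set.range fun k : ℕ => (z ^ k) w) = ⊤) :
    Submodule.span ℂ (Set.range fun k : ℕ =>
      ((LinearMap.prodMap (y : V →ₗ[ℂ] V) (z : W →ₗ[ℂ] W) : Module.End ℂ (V × W)) ^ k) (v, w))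
      = ⊤ :=
  Module.End.span_range_pow_prodMap_apply_eq_top
    (Module.End.isCoprime_minpoly_of_disjoint_spectrum (Set.disjoint_iff_inter_eq_empty.mpr hdisj))
    (minpoly.aeval ℂ y) (minpoly.aeval ℂ z) hv hw
end

section
/- Let g ≥ 2, ν ≥ 1 and let c = (c₁,…,c_r) be a composition of ν. Then there exists a tuple (x₁,…,x_g,y₁,…,y_g) of endomorphisms of ℂ^ν such that: (a) Σ_{i=1}^g (x_i y_i − y_i x_i) = 0; (b) the canonical flag (W_k) of (x_i,y_i) satisfies W_r = 0 and dim(W_{k−1}/W_k) = c_k for 1 ≤ k ≤ r; and (c) y₁ admits a cyclic vector: there exists v ∈ ℂ^ν with span{ y₁^k v : k ∈ ℕ } = ℂ^ν. -/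
open Module

section CanonicalFlag

variable {g ν : ℕ} (x y : Fin g → Module.End ℂ (Fin ν → ℂ)) (k : ℕ)

theorem canonicalFlag_succ_le {F : Submodule ℂ (Fin ν → ℂ)}
    (hx : ∀ i, (canonicalFlag x y k).map (x i) ≤ F) (hxF : ∀ i, F.map (x i) ≤ F)
    (hyF : ∀ i, F.map (y i) ≤ F) : canonicalFlag x y (k + 1) ≤ F :=
  sInf_le ⟨hx, hxF, hyF⟩

theorem map_le_canonicalFlag_succ (i : Fin g) :
    (canonicalFlag x y k).map (x i) ≤ canonicalFlag x y (k + 1) :=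
  le_sInf fun _ hS => hS.1 i

theorem map_canonicalFlag_succ_le (i : Fin g) :
    (canonicalFlag x y (k + 1)).map (y i) ≤ canonicalFlag x y (k + 1) :=
  le_sInf fun _ hS => (Submodule.map_mono (sInf_le hS)).trans (hS.2.2 i)

end CanonicalFlag

theorem Submodule.finrank_quotient_comap_subtype {K V : Type*} [Field K] [AddCommGroup V]
    [Module K V] [FiniteDimensional K V] {U W : Submodule K V} (h : W ≤ U) :
    finrank K (U ⧸ W.comap U.subtype) = finrank K U - finrank K W := by
  have := (W.comap U.subtype).finrank_quotient_add_finrank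
  rw [(Submodule.comapSubtypeEquivOfLe h).finrank_eq] at this
  omega

theorem Submodule.map_ite_zero_le {R M : Type*} [Semiring R] [AddCommMonoid M] [Module R M]
    {P : Prop} [Decidable P] {f : Module.End R M} {p q : Submodule R M} (h : p.map f ≤ q) :
    p.map (if P then f else 0) ≤ q := by
  split_ifs <;> simp [h]

namespace CompositionFlag

variable {ν : ℕ}

def tail (ν m : ℕ) : Submodule ℂ (Fin ν → ℂ) :=
  LinearMap.ker (LinearMap.funLeft ℂ ℂ (Subtype.val : {i : Fin ν // (i : ℕ) < m} → Fin ν))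

theorem mem_tail {m : ℕ} {v : Fin ν → ℂ} :
    v ∈ tail ν m ↔ ∀ i : Fin ν, (i : ℕ) < m → v i = 0 := by
  simp [tail, funext_iff, LinearMap.funLeft_apply]

theorem tail_zero : tail ν 0 = ⊤ := by
  ext; simp [mem_tail]

theorem tail_eq_bot {m : ℕ} (h : ν ≤ m) : tail ν m = ⊥ := by
  ext v
  simp only [mem_tail, Submodule.mem_bot, funext_iff]
  exact ⟨fun hv i => hv i (by omega), fun hv i _ => hv i⟩

theorem tail_antitone : Antitone (tail ν) :=
  fun _ _ h _ hv => mem_tail.2 fun i hi => mem_tail.1 hv i (hi.trans_le h)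

theorem finrank_tail (m : ℕ) : finrank ℂ (tail ν m) = ν - m := by
  let restrict := LinearMap.funLeft ℂ ℂ (Subtype.val : {i : Fin ν // (i : ℕ) < m} → Fin ν)
  have hrange : LinearMap.range restrict = ⊤ :=
    LinearMap.range_eq_top.2 <|
      LinearMap.funLeft_surjective_of_injective _ _ _ Subtype.val_injective
  have := restrict.finrank_range_add_finrank_ker
  rw [hrange, finrank_top, finrank_fintype_fun_eq_card, finrank_fintype_fun_eq_card,
    Fintype.card_subtype, Fin.card_filter_val_lt, Fintype.card_fin] at this
  change _ + finrank ℂ (tail ν m) = ν at this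
  omega

theorem finrank_tail_quotient {m m' : ℕ} (h : m ≤ m') (h' : m' ≤ ν) :
    finrank ℂ (tail ν m ⧸ (tail ν m').comap (tail ν m).subtype) = m' - m := by
  rw [Submodule.finrank_quotient_comap_subtype (tail_antitone h), finrank_tail, finrank_tail]
  omega

/-- `e n`, read as `0` when `ν ≤ n`, so that the shift needs no case split at the last index. -/
def basisVec (ν n : ℕ) : Fin ν → ℂ := fun i => if (i : ℕ) = n then 1 else 0

theorem basisVec_eq_zero {n : ℕ} (h : ν ≤ n) : basisVec ν n = 0 := by
  funext i; simp [basisVec]; omega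

theorem basisVec_mem_tail {m n : ℕ} (h : m ≤ n) : basisVec ν n ∈ tail ν m :=
  mem_tail.2 fun i hi => by simp [basisVec]; omega

theorem tail_le_of_basisVec_mem {m : ℕ} {S : Submodule ℂ (Fin ν → ℂ)}
    (h : ∀ n, m ≤ n → basisVec ν n ∈ S) : tail ν m ≤ S := by
  intro v hv
  rw [pi_eq_sum_univ v]
  refine S.sum_mem fun i _ => ?_
  by_cases hi : m ≤ (i : ℕ)
  · convert S.smul_mem (v i) (h i hi) using 2
    funext j; simp [basisVec, Fin.val_inj, eq_comm]
  · simp [mem_tail.1 hv i (by omega)]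

/-- The endomorphism whose matrix is the `0/1` incidence matrix of `r` (row index first). -/
noncomputable def relEnd (ν : ℕ) (r : ℕ → ℕ → Prop) [DecidableRel r] :
    Module.End ℂ (Fin ν → ℂ) :=
  Matrix.toLin' (Matrix.of fun i j : Fin ν => if r i j then 1 else 0)

theorem relEnd_basisVec {r : ℕ → ℕ → Prop} [DecidableRel r] {n : ℕ} (hn : n < ν) (i : Fin ν) :
    relEnd ν r (basisVec ν n) i = if r i n then 1 else 0 := by
  have : basisVec ν n = Pi.single (⟨n, hn⟩ : Fin ν) 1 := by
    funext j; simp [basisVec, Pi.single_apply, Fin.ext_iff]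
  simp [relEnd, this]

theorem map_relEnd_tail_le {r : ℕ → ℕ → Prop} [DecidableRel r] {m m' : ℕ}
    (h : ∀ i j, r i j → m ≤ j → m' ≤ i) :
    (tail ν m).map (relEnd ν r) ≤ tail ν m' := by
  rw [Submodule.map_le_iff_le_comap]
  intro v hv
  refine mem_tail.2 fun i hi => ?_
  simp only [relEnd, Matrix.toLin'_apply, Matrix.mulVec, dotProduct]
  refine Finset.sum_eq_zero fun j _ => ?_
  by_cases hj : m ≤ (j : ℕ)
  · have : ¬ r i j := fun hr => by have := h _ _ hr hj; omega
    simp [this]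
  · simp [mem_tail.1 hv j (by omega)]

noncomputable def shift (ν : ℕ) : Module.End ℂ (Fin ν → ℂ) := relEnd ν fun i j => i = j + 1

theorem shift_basisVec (n : ℕ) : shift ν (basisVec ν n) = basisVec ν (n + 1) := by
  rcases lt_or_ge n ν with hn | hn
  · funext i; simp [shift, relEnd_basisVec hn, basisVec]
  · rw [basisVec_eq_zero hn, basisVec_eq_zero (by omega), map_zero]

theorem shift_pow_basisVec_zero (k : ℕ) : (shift ν ^ k) (basisVec ν 0) = basisVec ν k := by
  induction k with
  | zero => rfl
  | succ k ih => rw [pow_succ', Module.End.mul_apply, ih, shift_basisVec]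

theorem span_shift_pow_basisVec_zero :
    Submodule.span ℂ (Set.range fun k : ℕ => (shift ν ^ k) (basisVec ν 0)) = ⊤ := by
  rw [eq_top_iff, ← tail_zero]
  exact tail_le_of_basisVec_mem fun n _ =>
    Submodule.subset_span ⟨n, shift_pow_basisVec_zero n⟩

theorem map_shift_tail_le (m : ℕ) : (tail ν m).map (shift ν) ≤ tail ν m :=
  map_relEnd_tail_le fun i j hij hj => by omega

theorem tail_le_of_shift_invariant {m : ℕ} {S : Submodule ℂ (Fin ν → ℂ)}
    (hS : S.map (shift ν) ≤ S) (hm : basisVec ν m ∈ S) : tail ν m ≤ S := by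
  refine tail_le_of_basisVec_mem fun n hn => ?_
  induction n, hn using Nat.le_induction with
  | base => exact hm
  | succ n _ ih => exact hS (shift_basisVec n ▸ Submodule.mem_map_of_mem ih)

def partialSum (c : List ℕ) (k : ℕ) : ℕ := (c.take k).sum

section Composition

variable {c : List ℕ}

theorem partialSum_succ (k : Fin c.length) :
    partialSum c (k + 1) = partialSum c k + c.get k :=
  List.sum_take_succ c k k.is_lt

theorem partialSum_mono : Monotone (partialSum c) := fun k l h => by
  rw [partialSum, ← min_eq_left h, ← List.take_take]
  exact (List.take_prefix _ _).sublist.sum_le_sum fun _ _ => Nat.zero_le _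

theorem partialSum_length : partialSum c c.length = c.sum := by
  simp [partialSum]

theorem partialSum_strictMonoOn (hpos : ∀ a ∈ c, 0 < a) :
    StrictMonoOn (partialSum c) (Set.Iic c.length) :=
  strictMonoOn_Iic_of_lt_succ fun k hk => by
    rw [Order.succ_eq_add_one]
    have hsucc : partialSum c (k + 1) = partialSum c k + c.get ⟨k, hk⟩ :=
      partialSum_succ ⟨k, hk⟩
    have := hpos _ (c.get_mem ⟨k, hk⟩)
    omega

variable (c) in
noncomputable def jump : Module.End ℂ (Fin c.sum → ℂ) :=
  relEnd c.sum fun i j => ∃ l < c.length, j = partialSum c l ∧ i = partialSum c (l + 1)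

theorem map_jump_tail_partialSum_le (hpos : ∀ a ∈ c, 0 < a) {k : ℕ} (hk : k < c.length) :
    (tail c.sum (partialSum c k)).map (jump c) ≤ tail c.sum (partialSum c (k + 1)) := by
  refine map_relEnd_tail_le fun i j ⟨l, hl, hj, hi⟩ hkj => ?_
  have hmono := partialSum_strictMonoOn hpos
  have : k ≤ l := (hmono.le_iff_le (Set.mem_Iic.2 hk.le) (Set.mem_Iic.2 hl.le)).1 (hj ▸ hkj)
  rw [hi]
  exact (hmono.le_iff_le (Set.mem_Iic.2 hk) (Set.mem_Iic.2 hl)).2 (by omega)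

theorem map_jump_tail_le_self (hpos : ∀ a ∈ c, 0 < a) (m : ℕ) :
    (tail c.sum m).map (jump c) ≤ tail c.sum m := by
  refine map_relEnd_tail_le fun i j ⟨l, hl, hj, hi⟩ hmj => ?_
  have : partialSum c l < partialSum c (l + 1) :=
    partialSum_strictMonoOn hpos (Set.mem_Iic.2 hl.le) (Set.mem_Iic.2 hl) (Nat.lt_succ_self l)
  omega

theorem jump_basisVec (hpos : ∀ a ∈ c, 0 < a) {k : ℕ} (hk : k < c.length) :
    jump c (basisVec c.sum (partialSum c k)) = basisVec c.sum (partialSum c (k + 1)) := by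
  have hmono := partialSum_strictMonoOn hpos
  have hlt : partialSum c k < c.sum := partialSum_length (c := c) ▸
    hmono (Set.mem_Iic.2 hk.le) (Set.mem_Iic.2 le_rfl) hk
  funext i
  rw [jump, relEnd_basisVec hlt]
  congr 1
  refine propext ⟨fun ⟨l, hl, hkl, hi⟩ => ?_, fun hi => ⟨k, hk, rfl, hi⟩⟩
  rwa [hmono.injOn (Set.mem_Iic.2 hk.le) (Set.mem_Iic.2 hl.le) hkl]

end Composition

variable (g : ℕ) (c : List ℕ)

noncomputable def xTuple : Fin g → Module.End ℂ (Fin c.sum → ℂ) :=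
  fun i => if (i : ℕ) = 1 then jump c else 0

noncomputable def yTuple : Fin g → Module.End ℂ (Fin c.sum → ℂ) :=
  fun i => if (i : ℕ) = 0 then shift c.sum else 0

theorem sum_commutator_xTuple_yTuple :
    ∑ i, (xTuple g c i * yTuple g c i - yTuple g c i * xTuple g c i) = 0 :=
  Finset.sum_eq_zero fun i _ => by
    by_cases hi : (i : ℕ) = 1 <;> simp [xTuple, yTuple, hi]

variable {g c}

theorem canonicalFlag_xTuple_yTuple (hg : 2 ≤ g) (hpos : ∀ a ∈ c, 0 < a) {k : ℕ}
    (hk : k ≤ c.length) :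
    canonicalFlag (xTuple g c) (yTuple g c) k = tail c.sum (partialSum c k) := by
  induction k with
  | zero => simp [canonicalFlag, partialSum, tail_zero]
  | succ k ih =>
    have hk : k < c.length := hk
    refine le_antisymm (canonicalFlag_succ_le _ _ _ ?_ ?_ ?_) ?_
    · exact fun i => ih hk.le ▸ Submodule.map_ite_zero_le (map_jump_tail_partialSum_le hpos hk)
    · exact fun i => Submodule.map_ite_zero_le (map_jump_tail_le_self hpos _)
    · exact fun i => Submodule.map_ite_zero_le (map_shift_tail_le _)
    · refine tail_le_of_shift_invariant
        (map_canonicalFlag_succ_le _ _ k ⟨0, by omega⟩) ?_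
      rw [← jump_basisVec hpos hk]
      refine map_le_canonicalFlag_succ _ _ k ⟨1, by omega⟩ (Submodule.mem_map_of_mem ?_)
      exact (ih hk.le).symm ▸ basisVec_mem_tail le_rfl

end CompositionFlag

open CompositionFlag in
/-- for every composition `c` of `ν` there is a point of the seminilpotent
variety (for the quiver with one vertex and `g ≥ 2` loops) whose canonical flag has
dimension vector `c` and whose component `y₁` admits a cyclic vector. -/
theorem exists_point_with_flag_and_cyclic_y1
    (g ν : ℕ) (hg : 2 ≤ g) (c : List ℕ)
    (hpos : ∀ a ∈ c, 0 < a) (hsum : c.sum = ν) :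
    ∃ x y : Fin g → Module.End ℂ (Fin ν → ℂ),
      -- (a) the moment map condition Σ [xᵢ, yᵢ] = 0
      (∑ i, (x i * y i - y i * x i) = 0) ∧
      -- (b) the canonical flag has dimension vector c
      canonicalFlag x y c.length = ⊥ ∧
      (∀ k : Fin c.length,
        Module.finrank ℂ
          (↥(canonicalFlag x y (k : ℕ)) ⧸
            (canonicalFlag x y ((k : ℕ) + 1)).comap (canonicalFlag x y (k : ℕ)).subtype)
          = c.get k) ∧
      -- (c) y₁ admits a cyclic vector
      (∃ v : Fin ν → ℂ,
        Submodule.span ℂ (Set.range fun k : ℕ => ((y ⟨0, by omega⟩) ^ k) v) = ⊤) := by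
  subst hsum
  have hflag := fun k => canonicalFlag_xTuple_yTuple (c := c) hg hpos (k := k)
  refine ⟨xTuple g c, yTuple g c, sum_commutator_xTuple_yTuple g c, ?_, fun k => ?_,
    basisVec c.sum 0, ?_⟩
  · rw [hflag _ le_rfl, partialSum_length, tail_eq_bot le_rfl]
  · rw [hflag _ k.is_lt.le, hflag _ k.is_lt,
      finrank_tail_quotient (partialSum_mono k.val.le_succ)
        (partialSum_length (c := c) ▸ partialSum_mono k.is_lt),
      partialSum_succ, Nat.add_sub_cancel_left]
  · simpa [yTuple] using span_shift_pow_basisVec_zero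
end

section
/- Let (I, Ω) be a quiver with doubled arrow set H, and let (V_i), (V′_i), (W_i), (W′_i) be finite-dimensional complex vector spaces indexed by I. Let X = (X_h)_{h∈H} be a representation of the doubled quiver on the spaces (V_i ⊕ V′_i) whose block decomposition is X_h(v, v′) = (x_h v + η_h v′, x′_h v′), where x is a representation on (V_i), x′ a representation on (V′_i), and η_h ∈ Hom(V′_{s(h)}, V_{t(h)}). Let F_i : V_i ⊕ V′_i → W_i ⊕ W′_i be given by F_i(v, v′) = (f_i v + θ_i v′, f′_i v′) with f_i : V_i → W_i, θ_i : V′_i → W_i, f′_i : V′_i → W′_i. Assume (x′, f′) is stable, i.e. the only family of subspaces S_i ⊆ ker f′_i with x′_h(S_{s(h)}) ⊆ S_{t(h)} for all h ∈ H is zero. Then every family of subspaces Y_i ⊆ V_i ⊕ V′_i satisfying X_h(Y_{s(h)}) ⊆ Y_{t(h)} for all h ∈ H and F_i(Y_i) ⊆ W_i × {0} for all i is contained in (V_i)_{i∈I}, i.e. Y_i ⊆ V_i ⊕ {0} for all i. In particular V = ⊕(V_i ⊕ {0}) is the largest X-invariant I-graded subspace of F^{−1}(W). -/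
/-! Both `X` and `F` are block upper triangular, so projecting an `X`-invariant family
`Y ⊆ F⁻¹(W × 0)` to the second summands gives an `x'`-invariant family inside `ker f'`.
Stability of `(x', f')` makes that family zero, i.e. `Y_i ⊆ V_i ⊕ 0`. For the same reason
`V_i ⊕ 0` is itself `X`-invariant and mapped by `F` into `W × 0`. -/

namespace Submodule

variable {R M M' N N' : Type*} [Semiring R]
  [AddCommMonoid M] [Module R M] [AddCommMonoid M'] [Module R M']
  [AddCommMonoid N] [Module R N] [AddCommMonoid N'] [Module R N']
  {a : M →ₗ[R] N} {b : M' →ₗ[R] N} {c : M' →ₗ[R] N'}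

theorem map_snd_le_ker_of_blockUpper {Y : Submodule R (M × M')}
    (hY : ∀ p ∈ Y, (a p.1 + b p.2, c p.2) ∈ (⊤ : Submodule R N).prod ⊥) :
    Y.map (LinearMap.snd R M M') ≤ LinearMap.ker c := by
  rintro _ ⟨p, hp, rfl⟩
  exact (hY p hp).2

theorem mem_map_snd_of_blockUpper {Y : Submodule R (M × M')} {Z : Submodule R (N × N')}
    (hY : ∀ p ∈ Y, (a p.1 + b p.2, c p.2) ∈ Z) {v : M'}
    (hv : v ∈ Y.map (LinearMap.snd R M M')) :
    c v ∈ Z.map (LinearMap.snd R N N') := by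
  obtain ⟨p, hp, rfl⟩ := hv
  exact ⟨_, hY p hp, rfl⟩

theorem blockUpper_mem_top_prod_bot {p : M × M'} (hp : p ∈ (⊤ : Submodule R M).prod ⊥) :
    (a p.1 + b p.2, c p.2) ∈ (⊤ : Submodule R N).prod (⊥ : Submodule R N') := by
  obtain ⟨-, hp₂⟩ := mem_prod.1 hp
  simp [mem_prod, (mem_bot R).1 hp₂]

end Submodule

theorem largest_invariant_subspace_general
    (I Ω : Type) (s t : Ω → I)
    (V V' W W' : I → Type)
    [∀ j, AddCommGroup (V j)] [∀ j, Module ℂ (V j)]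
    [∀ j, AddCommGroup (V' j)] [∀ j, Module ℂ (V' j)]
    [∀ j, AddCommGroup (W j)] [∀ j, Module ℂ (W j)]
    [∀ j, AddCommGroup (W' j)] [∀ j, Module ℂ (W' j)]
    (x : ∀ h : DblH Ω, V (dblSrc s t h) →ₗ[ℂ] V (dblTgt s t h))
    (x' : ∀ h : DblH Ω, V' (dblSrc s t h) →ₗ[ℂ] V' (dblTgt s t h))
    (η : ∀ h : DblH Ω, V' (dblSrc s t h) →ₗ[ℂ] V (dblTgt s t h))
    (f : ∀ i, V i →ₗ[ℂ] W i) (θ : ∀ i, V' i →ₗ[ℂ] W i) (f' : ∀ i, V' i →ₗ[ℂ] W' i)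
    (hstable : ∀ S : ∀ i, Submodule ℂ (V' i),
      (∀ i, S i ≤ LinearMap.ker (f' i)) →
      (∀ h : DblH Ω, ∀ v ∈ S (dblSrc s t h), x' h v ∈ S (dblTgt s t h)) →
      ∀ i, S i = ⊥) :
    -- every X-invariant graded family inside F⁻¹(W × 0) is contained in (V_i ⊕ 0)
    (∀ Y : ∀ i, Submodule ℂ (V i × V' i),
      (∀ h : DblH Ω, ∀ p ∈ Y (dblSrc s t h),
        ((x h p.1 + η h p.2, x' h p.2) : V (dblTgt s t h) × V' (dblTgt s t h))
          ∈ Y (dblTgt s t h)) →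
      (∀ i, ∀ p ∈ Y i,
        ((f i p.1 + θ i p.2, f' i p.2) : W i × W' i)
          ∈ (⊤ : Submodule ℂ (W i)).prod (⊥ : Submodule ℂ (W' i))) →
      ∀ i, Y i ≤ (⊤ : Submodule ℂ (V i)).prod (⊥ : Submodule ℂ (V' i))) ∧
    -- and (V_i ⊕ 0) itself is X-invariant and mapped by F into W × 0
    (∀ h : DblH Ω, ∀ p ∈ (⊤ : Submodule ℂ (V (dblSrc s t h))).prod
        (⊥ : Submodule ℂ (V' (dblSrc s t h))),
      ((x h p.1 + η h p.2, x' h p.2) : V (dblTgt s t h) × V' (dblTgt s t h))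
        ∈ (⊤ : Submodule ℂ (V (dblTgt s t h))).prod (⊥ : Submodule ℂ (V' (dblTgt s t h)))) ∧
    (∀ i, ∀ p ∈ (⊤ : Submodule ℂ (V i)).prod (⊥ : Submodule ℂ (V' i)),
      ((f i p.1 + θ i p.2, f' i p.2) : W i × W' i)
        ∈ (⊤ : Submodule ℂ (W i)).prod (⊥ : Submodule ℂ (W' i))) := by
  refine ⟨fun Y hinv hF i => ?_, fun _ _ hp => Submodule.blockUpper_mem_top_prod_bot hp,
    fun _ _ hp => Submodule.blockUpper_mem_top_prod_bot hp⟩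
  have hsnd : ∀ j, (Y j).map (LinearMap.snd ℂ (V j) (V' j)) = ⊥ :=
    hstable (fun j => (Y j).map (LinearMap.snd ℂ (V j) (V' j)))
      (fun j => Submodule.map_snd_le_ker_of_blockUpper (hF j))
      (fun h _ hv => Submodule.mem_map_snd_of_blockUpper (hinv h) hv)
  exact (Submodule.le_prod_iff ℂ _ _).2 ⟨le_top, (hsnd i).le⟩

/-- with `X_h(v,v′) = (x_h v + η_h v′, x′_h v′)` and
`F_i(v,v′) = (f_i v + θ_i v′, f′_i v′)`, if `(x′, f′)` is stable, then every
`X`-invariant family `(Y_i)` with `F_i(Y_i) ⊆ W_i × 0` satisfies `Y_i ⊆ V_i ⊕ 0`;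
and `(V_i ⊕ 0)_i` itself is such a family, hence is the largest `X`-invariant
`I`-graded subspace of `F⁻¹(W)`. -/
theorem largest_invariant_subspace
    (I Ω : Type) (s t : Ω → I)
    (V V' W W' : I → Type)
    [∀ j, AddCommGroup (V j)] [∀ j, Module ℂ (V j)] [∀ j, FiniteDimensional ℂ (V j)]
    [∀ j, AddCommGroup (V' j)] [∀ j, Module ℂ (V' j)] [∀ j, FiniteDimensional ℂ (V' j)]
    [∀ j, AddCommGroup (W j)] [∀ j, Module ℂ (W j)] [∀ j, FiniteDimensional ℂ (W j)]
    [∀ j, AddCommGroup (W' j)] [∀ j, Module ℂ (W' j)] [∀ j, FiniteDimensional ℂ (W' j)]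
    (x : ∀ h : DblH Ω, V (dblSrc s t h) →ₗ[ℂ] V (dblTgt s t h))
    (x' : ∀ h : DblH Ω, V' (dblSrc s t h) →ₗ[ℂ] V' (dblTgt s t h))
    (η : ∀ h : DblH Ω, V' (dblSrc s t h) →ₗ[ℂ] V (dblTgt s t h))
    (f : ∀ i, V i →ₗ[ℂ] W i) (θ : ∀ i, V' i →ₗ[ℂ] W i) (f' : ∀ i, V' i →ₗ[ℂ] W' i)
    (hstable : ∀ S : ∀ i, Submodule ℂ (V' i),
      (∀ i, S i ≤ LinearMap.ker (f' i)) →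
      (∀ h : DblH Ω, ∀ v ∈ S (dblSrc s t h), x' h v ∈ S (dblTgt s t h)) →
      ∀ i, S i = ⊥) :
    -- every X-invariant graded family inside F⁻¹(W × 0) is contained in (V_i ⊕ 0)
    (∀ Y : ∀ i, Submodule ℂ (V i × V' i),
      (∀ h : DblH Ω, ∀ p ∈ Y (dblSrc s t h),
        ((x h p.1 + η h p.2, x' h p.2) : V (dblTgt s t h) × V' (dblTgt s t h))
          ∈ Y (dblTgt s t h)) →
      (∀ i, ∀ p ∈ Y i,
        ((f i p.1 + θ i p.2, f' i p.2) : W i × W' i)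
          ∈ (⊤ : Submodule ℂ (W i)).prod (⊥ : Submodule ℂ (W' i))) →
      ∀ i, Y i ≤ (⊤ : Submodule ℂ (V i)).prod (⊥ : Submodule ℂ (V' i))) ∧
    -- and (V_i ⊕ 0) itself is X-invariant and mapped by F into W × 0
    (∀ h : DblH Ω, ∀ p ∈ (⊤ : Submodule ℂ (V (dblSrc s t h))).prod
        (⊥ : Submodule ℂ (V' (dblSrc s t h))),
      ((x h p.1 + η h p.2, x' h p.2) : V (dblTgt s t h) × V' (dblTgt s t h))
        ∈ (⊤ : Submodule ℂ (V (dblTgt s t h))).prod (⊥ : Submodule ℂ (V' (dblTgt s t h)))) ∧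
    (∀ i, ∀ p ∈ (⊤ : Submodule ℂ (V i)).prod (⊥ : Submodule ℂ (V' i)),
      ((f i p.1 + θ i p.2, f' i p.2) : W i × W' i)
        ∈ (⊤ : Submodule ℂ (W i)).prod (⊥ : Submodule ℂ (W' i))) :=
  largest_invariant_subspace_general I Ω s t V V' W W' x x' η f θ f' hstable
end

section
/- Let (I, Ω) be a quiver with doubled arrow set H, (V_i) and (W_i) finite-dimensional complex vector spaces indexed by I, x = (x_h)_{h∈H} a representation of the doubled quiver on (V_i), f_i : V_i → W_i and g_i : W_i → V_i linear maps. Assume (x, f) is stable, i.e. the only family of subspaces S_i ⊆ ker f_i with x_h(S_{s(h)}) ⊆ S_{t(h)} for all h ∈ H is zero. If γ = (γ_i)_{i∈I} with γ_i ∈ GL(V_i) fixes (x, f, g), i.e. γ_{t(h)} ∘ x_h = x_h ∘ γ_{s(h)} for all h ∈ H, f_i ∘ γ_i = f_i and γ_i ∘ g_i = g_i for all i ∈ I, then γ_i = id_{V_i} for all i. (The action of G_ν = ∏_i GL(V_i) on the stable locus is free.) -/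
/-! If `γ` fixes `(x, f)`, the images `im (γᵢ - 1)` form a subrepresentation of `x` lying in
`ker f`; stability kills it, so `γᵢ = 1`. -/

namespace LinearMap

variable {R M N : Type*} [Ring R] [AddCommGroup M] [Module R M] [AddCommGroup N] [Module R N]

theorem range_sub_one_le_ker {f : M →ₗ[R] N} {γ : Module.End R M}
    (hf : ∀ v, f (γ v) = f v) : range (γ - 1) ≤ ker f := by
  rintro _ ⟨u, rfl⟩
  simp [hf u]

theorem mem_range_sub_one_of_commute {φ : M →ₗ[R] N} {γ : Module.End R M}
    {γ' : Module.End R N} (hφ : ∀ v, γ' (φ v) = φ (γ v)) :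
    ∀ v ∈ range (γ - 1), φ v ∈ range (γ' - 1) := by
  rintro _ ⟨u, rfl⟩
  exact ⟨φ u, by simp [hφ u]⟩

end LinearMap

theorem stabilizer_trivial_of_stable_general
    (I Ω : Type) (s t : Ω → I)
    (V W : I → Type)
    [∀ j, AddCommGroup (V j)] [∀ j, Module ℂ (V j)]
    [∀ j, AddCommGroup (W j)] [∀ j, Module ℂ (W j)]
    (x : ∀ h : DblH Ω, V (dblSrc s t h) →ₗ[ℂ] V (dblTgt s t h))
    (f : ∀ i, V i →ₗ[ℂ] W i)
    (hstable : ∀ S : ∀ i, Submodule ℂ (V i),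
      (∀ i, S i ≤ LinearMap.ker (f i)) →
      (∀ h : DblH Ω, ∀ v ∈ S (dblSrc s t h), x h v ∈ S (dblTgt s t h)) →
      ∀ i, S i = ⊥)
    (γ : ∀ i, V i ≃ₗ[ℂ] V i)
    (hx : ∀ h : DblH Ω, ∀ v : V (dblSrc s t h),
      γ (dblTgt s t h) (x h v) = x h (γ (dblSrc s t h) v))
    (hf : ∀ i, ∀ v : V i, f i (γ i v) = f i v) :
    ∀ i, ∀ v : V i, γ i v = v := by
  intro i v
  have hbot : LinearMap.range ((γ i : Module.End ℂ (V i)) - 1) = ⊥ :=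
    hstable (fun j => LinearMap.range ((γ j : Module.End ℂ (V j)) - 1))
      (fun j => LinearMap.range_sub_one_le_ker (hf j))
      (fun h => LinearMap.mem_range_sub_one_of_commute (hx h)) i
  have hγ : (γ i : Module.End ℂ (V i)) = 1 := sub_eq_zero.mp (LinearMap.range_eq_bot.mp hbot)
  exact LinearMap.congr_fun hγ v

/-- the action of `∏ᵢ GL(Vᵢ)` on stable points `(x, f, g)` is free: if
`(x, f)` is stable and `γ = (γᵢ)` fixes `(x, f, g)`, then `γ` is the identity. -/
theorem stabilizer_trivial_of_stable
    (I Ω : Type) (s t : Ω → I)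
    (V W : I → Type)
    [∀ j, AddCommGroup (V j)] [∀ j, Module ℂ (V j)] [∀ j, FiniteDimensional ℂ (V j)]
    [∀ j, AddCommGroup (W j)] [∀ j, Module ℂ (W j)] [∀ j, FiniteDimensional ℂ (W j)]
    (x : ∀ h : DblH Ω, V (dblSrc s t h) →ₗ[ℂ] V (dblTgt s t h))
    (f : ∀ i, V i →ₗ[ℂ] W i) (g : ∀ i, W i →ₗ[ℂ] V i)
    (hstable : ∀ S : ∀ i, Submodule ℂ (V i),
      (∀ i, S i ≤ LinearMap.ker (f i)) →
      (∀ h : DblH Ω, ∀ v ∈ S (dblSrc s t h), x h v ∈ S (dblTgt s t h)) →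
      ∀ i, S i = ⊥)
    (γ : ∀ i, V i ≃ₗ[ℂ] V i)
    (hx : ∀ h : DblH Ω, ∀ v : V (dblSrc s t h),
      γ (dblTgt s t h) (x h v) = x h (γ (dblSrc s t h) v))
    (hf : ∀ i, ∀ v : V i, f i (γ i v) = f i v)
    (hg : ∀ i, ∀ w : W i, γ i (g i w) = g i w) :
    ∀ i, ∀ v : V i, γ i v = v :=
  stabilizer_trivial_of_stable_general I Ω s t V W x f hstable γ hx hf
end
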